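/- arXiv:2605.06954 — 2 statements merged into one kernel-verified Lean document; each statement's English description precedes it below -/
import Mathlib

section
/- The approximate value function computed by grid-based backward dynamic programming with bilinear interpolation satisfies the uniform error bound max_{s∈S} |V_t(s) - V̂_t(s)| ≤ L_V(T - t)Δ for every stage t, i.e., the discretization error grows at most linearly in the remaining horizon. -/
lemma abs_sInf_image_sub_le {S : Set ℝ} (hS : S.Nonempty) {f g : ℝ → ℝ} {K : ℝ}
    (hK : 0 ≤ K) (hfg : ∀ c ∈ S, |f c - g c| ≤ K) :
    |sInf (f '' S) - sInf (g '' S)| ≤ K := by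
  by_cases hbf : BddBelow (f '' S)
  · have hbg : BddBelow (g '' S) := by
      obtain ⟨m, hm⟩ := hbf
      refine ⟨m - K, ?_⟩
      rintro _ ⟨c, hc, rfl⟩
      have h1 : m ≤ f c := hm ⟨c, hc, rfl⟩
      have h2 := abs_le.mp (hfg c hc)
      linarith [h2.1, h2.2]
    have hne : (f '' S).Nonempty := hS.image f
    have hneg : (g '' S).Nonempty := hS.image g
    rw [abs_sub_le_iff]
    constructor
    · have : sInf (f '' S) - K ≤ sInf (g '' S) := by
        apply le_csInf hneg
        rintro _ ⟨c, hc, rfl⟩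
        have h1 : sInf (f '' S) ≤ f c := csInf_le hbf ⟨c, hc, rfl⟩
        have h2 := abs_le.mp (hfg c hc)
        linarith [h2.1, h2.2]
      linarith
    · have : sInf (g '' S) - K ≤ sInf (f '' S) := by
        apply le_csInf hne
        rintro _ ⟨c, hc, rfl⟩
        have h1 : sInf (g '' S) ≤ g c := csInf_le hbg ⟨c, hc, rfl⟩
        have h2 := abs_le.mp (hfg c hc)
        linarith [h2.1, h2.2]
      linarith
  · have hbg : ¬ BddBelow (g '' S) := by
      intro hbg
      apply hbf
      obtain ⟨m, hm⟩ := hbg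
      refine ⟨m - K, ?_⟩
      rintro _ ⟨c, hc, rfl⟩
      have h1 : m ≤ g c := hm ⟨c, hc, rfl⟩
      have h2 := abs_le.mp (hfg c hc)
      linarith [h2.1, h2.2]
    rw [Real.sInf_of_not_bddBelow hbf, Real.sInf_of_not_bddBelow hbg]
    simpa using hK

/-- Grid-based backward DP with bilinear interpolation satisfies the
uniform discretization error bound `|V_t(s) - V̂_t(s)| ≤ L_V (T - t) Δ`.
The exact value functions satisfy `V_T ≡ 0` and the Bellman recursion over
`c ∈ [0,η]`; the approximations use the interpolation operator `I`, which is
non-expansive in sup-norm and has interpolation error at most `L_V Δ` on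
`L_V`-Lipschitz functions; each `V_t` is `L_V`-Lipschitz. -/
theorem dp_discretization_error
    (T : ℕ) (η Δ L_V : ℝ) (hη : 0 ≤ η) (hΔ : 0 ≤ Δ) (hL : 0 ≤ L_V)
    (C : (ℝ × ℝ) → ℝ → ℝ) (h : (ℝ × ℝ) → ℝ → (ℝ × ℝ))
    (I : ((ℝ × ℝ) → ℝ) → (ℝ × ℝ) → ℝ)
    (V Vhat : ℕ → (ℝ × ℝ) → ℝ)
    (hVT : ∀ s, V T s = 0)
    (hVhatT : ∀ s, Vhat T s = 0)
    (hV : ∀ t < T, ∀ s, V t s =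
      sInf ((fun c => C s c + V (t + 1) (h s c)) '' Set.Icc (0:ℝ) η))
    (hVhat : ∀ t < T, ∀ s, Vhat t s =
      sInf ((fun c => C s c + I (Vhat (t + 1)) (h s c)) '' Set.Icc (0:ℝ) η))
    (hI_nonexp : ∀ (f g : (ℝ × ℝ) → ℝ) (K : ℝ),
      (∀ s, |f s - g s| ≤ K) → ∀ s, |I f s - I g s| ≤ K)
    (hI_err : ∀ f : (ℝ × ℝ) → ℝ, LipschitzWith (Real.toNNReal L_V) f →
      ∀ s, |I f s - f s| ≤ L_V * Δ)
    (hVLip : ∀ t, LipschitzWith (Real.toNNReal L_V) (V t)) :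
    ∀ t ≤ T, ∀ s, |V t s - Vhat t s| ≤ L_V * ((T : ℝ) - (t : ℝ)) * Δ := by
  -- prove by induction on n = T - t
  suffices H : ∀ n t, t + n = T → ∀ s, |V t s - Vhat t s| ≤ L_V * (n : ℝ) * Δ by
    intro t ht s
    have := H (T - t) t (by omega) s
    have hc : ((T - t : ℕ) : ℝ) = (T : ℝ) - (t : ℝ) := by
      push_cast [Nat.cast_sub ht]; ring
    rwa [hc] at this
  intro n
  induction n with
  | zero =>
    intro t ht s
    have : t = T := by omega
    subst this
    simp [hVT, hVhatT]
  | succ n ih =>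
    intro t ht s
    have htT : t < T := by omega
    have ihb : ∀ x, |V (t + 1) x - Vhat (t + 1) x| ≤ L_V * (n : ℝ) * Δ :=
      ih (t + 1) (by omega)
    -- bound between V(t+1) and I (Vhat (t+1))
    have key : ∀ x, |V (t + 1) x - I (Vhat (t + 1)) x| ≤ L_V * ((n : ℝ) + 1) * Δ := by
      intro x
      have h1 : |I (V (t + 1)) x - V (t + 1) x| ≤ L_V * Δ := hI_err _ (hVLip (t + 1)) x
      have h2 : |I (V (t + 1)) x - I (Vhat (t + 1)) x| ≤ L_V * (n : ℝ) * Δ :=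
        hI_nonexp _ _ _ ihb x
      calc |V (t + 1) x - I (Vhat (t + 1)) x|
          ≤ |V (t + 1) x - I (V (t + 1)) x| + |I (V (t + 1)) x - I (Vhat (t + 1)) x| :=
            abs_sub_le _ _ _
        _ ≤ L_V * Δ + L_V * (n : ℝ) * Δ := by
            rw [abs_sub_comm] at h1; exact add_le_add h1 h2
        _ = L_V * ((n : ℝ) + 1) * Δ := by ring
    rw [hV t htT s, hVhat t htT s]
    have hK : (0:ℝ) ≤ L_V * ((n : ℝ) + 1) * Δ := by positivity
    have := abs_sInf_image_sub_le (f := fun c => C s c + V (t + 1) (h s c))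
      (g := fun c => C s c + I (Vhat (t + 1)) (h s c))
      (Set.nonempty_Icc.mpr hη) hK
      (fun c _ => by simpa using key (h s c))
    simpa using this.trans_eq (by push_cast; ring)
end

section
/- Shapley–Folkman lemma: if S_1, ..., S_N are nonempty subsets of ℝ^d and x ∈ Σ_{i=1}^N conv(S_i), then x can be written as x = Σ_{i=1}^N x_i where x_i ∈ conv(S_i) for all i and x_i ∈ S_i for all but at most d of the indices i. -/
open Finset Module

-- affine embedding s ↦ (s, Pi.single i 1)
noncomputable def sfEmb (d N : ℕ) (i : Fin N) :
    (Fin d → ℝ) →ᵃ[ℝ] ((Fin d → ℝ) × (Fin N → ℝ)) where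
  toFun s := (s, Pi.single i 1)
  linear := LinearMap.inl ℝ _ _
  map_vadd' p v := by ext <;> simp

/-- Shapley–Folkman lemma: if `S_1, …, S_N ⊆ ℝ^d` are nonempty and
`x` lies in the Minkowski sum of their convex hulls, then `x = Σ x_i` with each
`x_i ∈ conv(S_i)` and `x_i ∈ S_i` for all but at most `d` indices. -/
theorem shapley_folkman
    (d N : ℕ) (S : Fin N → Set (Fin d → ℝ))
    (hS : ∀ i, (S i).Nonempty)
    (x : Fin d → ℝ) (y : Fin N → (Fin d → ℝ))
    (hy : ∀ i, y i ∈ convexHull ℝ (S i)) (hx : x = ∑ i, y i) :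
    ∃ z : Fin N → (Fin d → ℝ),
      (∀ i, z i ∈ convexHull ℝ (S i)) ∧
      x = ∑ i, z i ∧
      {i | z i ∉ S i}.ncard ≤ d := by
  rcases Nat.eq_zero_or_pos N with hN | hN
  · subst hN
    refine ⟨y, hy, hx, ?_⟩
    have : {i : Fin 0 | y i ∉ S i} = ∅ := Set.eq_empty_of_isEmpty _
    simp [this]
  -- lifted set
  set T : Set ((Fin d → ℝ) × (Fin N → ℝ)) := ⋃ i, (sfEmb d N i) '' (S i) with hT
  -- the lifted point lies in the convex hull of T
  have hNne : (N : ℝ) ≠ 0 := Nat.cast_ne_zero.2 hN.ne'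
  have hp : ((N : ℝ)⁻¹ • x, fun _ => (N : ℝ)⁻¹) ∈ convexHull ℝ T := by
    have hmem : ∀ i, (sfEmb d N i) (y i) ∈ convexHull ℝ T := by
      intro i
      have h1 : (sfEmb d N i) (y i) ∈ (sfEmb d N i) '' (convexHull ℝ (S i)) :=
        Set.mem_image_of_mem _ (hy i)
      rw [AffineMap.image_convexHull] at h1
      exact convexHull_mono (Set.subset_iUnion (fun j => (sfEmb d N j) '' (S j)) i) h1
    have hcomb := (convex_convexHull ℝ T).sum_mem (t := Finset.univ)
      (w := fun _ : Fin N => (N : ℝ)⁻¹) (fun i _ => by positivity)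
      (by simp [Finset.card_univ, hNne]) (fun i _ => hmem i)
    convert hcomb using 1
    ext j
    · simp [sfEmb, hx, Prod.fst_sum, Finset.sum_apply, Finset.mul_sum]
    · simp [sfEmb, Prod.snd_sum, Finset.sum_apply, Pi.single_apply, Finset.mul_sum]
  obtain ⟨ι, hι, z, w, hzT, hindep, hwpos, hwsum, hzsum⟩ :=
    eq_pos_convex_span_of_mem_convexHull hp
  -- decompose each z t
  have hdec : ∀ t : ι, ∃ i : Fin N, ∃ p ∈ S i, z t = (p, Pi.single i 1) := by
    intro t
    have := hzT (Set.mem_range_self t)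
    rw [hT] at this
    obtain ⟨i, p, hp1, hp2⟩ := Set.mem_iUnion.1 this
    exact ⟨i, p, hp1, hp2.symm⟩
  choose idx pt hpt hzeq using hdec
  set fib : Fin N → Finset ι := fun i => Finset.univ.filter (fun t => idx t = i) with hfib
  -- coordinate equations
  have hsnd : ∀ i : Fin N, ∑ t ∈ fib i, w t = (N : ℝ)⁻¹ := by
    intro i
    have h2 := congrArg (fun p => p.2 i) hzsum
    simp only [Prod.snd_sum, Finset.sum_apply, Prod.smul_snd, Pi.smul_apply] at h2
    rw [← h2, hfib]
    rw [Finset.sum_filter]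
    apply Finset.sum_congr rfl
    intro t _
    rw [hzeq t]
    by_cases h : idx t = i
    · simp [h, Pi.single_apply]
    · simp [h, Pi.single_apply, Ne.symm h]
  have hfst : ∑ t, w t • pt t = (N : ℝ)⁻¹ • x := by
    have h1 := congrArg Prod.fst hzsum
    simp only [Prod.fst_sum, Prod.smul_fst] at h1
    rw [← h1]
    apply Finset.sum_congr rfl
    intro t _
    rw [hzeq t]
  -- each fiber is nonempty
  have hfibne : ∀ i, (fib i).Nonempty := by
    intro i
    rw [Finset.nonempty_iff_ne_empty]
    intro h
    have := hsnd i
    rw [h, Finset.sum_empty] at this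
    exact absurd this.symm (by positivity)
  -- cardinality bound via affine independence in a hyperplane
  have hcard : Fintype.card ι ≤ d + N := by
    have h1 := hindep.card_le_finrank_succ
    set g : ((Fin d → ℝ) × (Fin N → ℝ)) →ₗ[ℝ] ℝ :=
      (∑ j : Fin N, LinearMap.proj j).comp (LinearMap.snd ℝ _ _) with hg
    have hgz : ∀ t, g (z t) = 1 := by
      intro t
      rw [hzeq t]
      simp [hg, LinearMap.sum_apply, Pi.single_apply]
    have hsub : vectorSpan ℝ (Set.range z) ≤ LinearMap.ker g := by
      rw [vectorSpan_def, Submodule.span_le]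
      rintro v ⟨p, hp, q, hq, rfl⟩
      obtain ⟨t1, rfl⟩ := hp
      obtain ⟨t2, rfl⟩ := hq
      simp [LinearMap.mem_ker, vsub_eq_sub, map_sub, hgz]
    have hgsurj : Function.Surjective g := by
      intro c
      obtain ⟨i0⟩ := Fin.pos_iff_nonempty.1 hN
      exact ⟨(0, Pi.single i0 c), by simp [hg, LinearMap.sum_apply, Pi.single_apply]⟩
    have hker : 1 + finrank ℝ (LinearMap.ker g) = d + N := by
      have h3 := g.finrank_range_add_finrank_ker
      rw [LinearMap.range_eq_top.2 hgsurj] at h3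
      simp only [finrank_top, finrank_self] at h3
      rw [h3]
      simp [finrank_prod]
    have h2 : finrank ℝ (vectorSpan ℝ (Set.range z)) ≤ finrank ℝ (LinearMap.ker g) :=
      Submodule.finrank_mono hsub
    omega
  -- counting
  set B : Finset (Fin N) := Finset.univ.filter (fun i => 2 ≤ (fib i).card) with hB
  have hsumcard : ∑ i, (fib i).card = Fintype.card ι := by
    rw [← Finset.card_univ]
    rw [hfib]
    exact Finset.card_eq_sum_card_fiberwise (fun t _ => Finset.mem_univ (idx t)) |>.symm
  have hBd : B.card ≤ d := by
    have h1 : N + B.card ≤ ∑ i, (fib i).card := by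
      calc N + B.card = ∑ i : Fin N, (1 + if i ∈ B then 1 else 0) := by
              rw [Finset.sum_add_distrib]
              simp [Finset.sum_ite_mem, hB]
        _ ≤ ∑ i, (fib i).card := by
              apply Finset.sum_le_sum
              intro i _
              by_cases h : i ∈ B
              · simp only [h, if_true]
                exact (Finset.mem_filter.1 h).2
              · simp only [h, if_false]
                exact Finset.card_pos.2 (hfibne i)
    omega
  -- define the z's
  set z' : Fin N → (Fin d → ℝ) := fun i => (N : ℝ) • ∑ t ∈ fib i, w t • pt t with hz'
  have hz'mem : ∀ i, z' i ∈ convexHull ℝ (S i) := by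
    intro i
    have : z' i = ∑ t ∈ fib i, ((N : ℝ) * w t) • pt t := by
      simp only [hz', Finset.smul_sum, smul_smul]
    rw [this]
    apply (convex_convexHull ℝ (S i)).sum_mem
    · intro t _; exact mul_nonneg (by positivity) (hwpos t).le
    · rw [← Finset.mul_sum, hsnd i, mul_inv_cancel₀ hNne]
    · intro t ht
      have : idx t = i := (Finset.mem_filter.1 ht).2
      exact subset_convexHull ℝ (S i) (this ▸ hpt t)
  have hz'sum : x = ∑ i, z' i := by
    rw [hz']
    rw [← Finset.smul_sum]
    rw [Finset.sum_fiberwise_of_maps_to (g := idx) (fun t _ => Finset.mem_univ (idx t))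
      (fun t => w t • pt t)]
    rw [hfst, smul_smul, mul_inv_cancel₀ hNne, one_smul]
  have hbad : {i | z' i ∉ S i} ⊆ ↑B := by
    intro i hi
    by_contra h
    have h1 : (fib i).card = 1 := by
      have := Finset.card_pos.2 (hfibne i)
      have h2 : ¬ 2 ≤ (fib i).card := fun hc => h (Finset.mem_filter.2 ⟨Finset.mem_univ _, hc⟩)
      omega
    obtain ⟨t0, ht0⟩ := Finset.card_eq_one.1 h1
    have hw0 : w t0 = (N : ℝ)⁻¹ := by
      have := hsnd i
      rwa [ht0, Finset.sum_singleton] at this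
    have : z' i = pt t0 := by
      simp only [hz', ht0, Finset.sum_singleton, hw0, smul_smul]
      rw [mul_inv_cancel₀ hNne, one_smul]
    have hti : idx t0 = i := by
      have : t0 ∈ fib i := by rw [ht0]; exact Finset.mem_singleton_self t0
      exact (Finset.mem_filter.1 this).2
    exact hi (this ▸ (hti ▸ hpt t0))
  refine ⟨z', hz'mem, hz'sum, ?_⟩
  calc {i | z' i ∉ S i}.ncard ≤ (↑B : Set (Fin N)).ncard := Set.ncard_le_ncard hbad B.finite_toSet
    _ = B.card := Set.ncard_coe_finset B
    _ ≤ d := hBd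
end
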